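/- Let g be a finite-dimensional real Lie algebra, k₀ := min{dim g(ξ) : ξ ∈ g*}, and g*_gen := {ξ ∈ g* : dim g(ξ) = k₀}. If O ⊆ g* is a nonempty open subset such that O is contained in the closure of the coadjoint orbit Int(g)·ξ for every ξ ∈ O, then O ⊆ g*_gen. (In the paper: every coadjoint quasi-orbit of a solvable Lie group that is open in g* consists of coadjoint orbits of maximal dimension.) -/

import Mathlib

/-!
The dimension of `g(ξ)` is the nullity of the bilinear family `ξ ↦ (x ↦ ξ ∘ ad x)`, which depends
linearly on `ξ`. Its rank is lower semicontinuous, so `{ζ | d ≤ dim g(ζ)}` is closed; and along any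
line through a point of maximal rank the rank stays maximal off a finite set (a determinant is a
nonzero polynomial), so every nonempty open set meets `g*_gen`. Since `exp (ad x)` is a Lie algebra
automorphism, `dim g(·)` is constant on coadjoint orbits. Hence for `ξ ∈ O` the closed set
`{ζ | dim g(ξ) ≤ dim g(ζ)}` contains the orbit closure of `ξ`, hence `O`, hence a generic point,
which forces `dim g(ξ) = k₀`.
-/

/-- The exponential of a linear endomorphism of a finite-dimensional real vector
space, computed via the matrix exponential in any basis. -/
noncomputable def expEnd {V : Type*} [AddCommGroup V] [Module ℝ V] [FiniteDimensional ℝ V]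
    (f : Module.End ℝ V) : Module.End ℝ V :=
  Matrix.toLin (Module.finBasis ℝ V) (Module.finBasis ℝ V)
    (NormedSpace.exp (LinearMap.toMatrix (Module.finBasis ℝ V) (Module.finBasis ℝ V) f))

/-- `Int(g)`: the subgroup of `GL(g)` generated by the exponentials `exp (ad x)`, `x ∈ g`. -/
noncomputable def intGroup (g : Type*) [LieRing g] [LieAlgebra ℝ g] [FiniteDimensional ℝ g] :
    Subgroup (g ≃ₗ[ℝ] g) :=
  Subgroup.closure {γ : g ≃ₗ[ℝ] g | ∃ x : g, γ.toLinearMap = expEnd (LieAlgebra.ad ℝ g x)}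

/-- The coadjoint orbit `Int(g)·ξ ⊆ g*`, where `γ·ξ := ξ ∘ γ⁻¹`. -/
noncomputable def coadOrbit {g : Type*} [LieRing g] [LieAlgebra ℝ g] [FiniteDimensional ℝ g]
    (ξ : Module.Dual ℝ g) : Set (Module.Dual ℝ g) :=
  {η | ∃ γ ∈ intGroup g, η = ξ ∘ₗ (γ⁻¹ : g ≃ₗ[ℝ] g).toLinearMap}

/-- The coadjoint stabilizer subalgebra `g(ξ) = {x ∈ g | ξ [x,·] = 0}`, as a subspace. -/
def coadStab (g : Type*) [LieRing g] [LieAlgebra ℝ g] (ξ : Module.Dual ℝ g) :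
    Submodule ℝ g where
  carrier := {x : g | ∀ y : g, ξ ⁅x, y⁆ = 0}
  add_mem' := by
    intro a b ha hb y
    rw [add_lie, map_add, ha y, hb y, add_zero]
  zero_mem' := by
    intro y
    rw [zero_lie, map_zero]
  smul_mem' := by
    intro c a ha y
    rw [smul_lie, map_smul, ha y, smul_zero]

open Module NormedSpace
open scoped Matrix

theorem LinearMap.le_finrank_range_iff_exists_linearIndependent {K M N : Type*} [DivisionRing K]
    [AddCommGroup M] [Module K M] [AddCommGroup N] [Module K N] [FiniteDimensional K N]
    (f : M →ₗ[K] N) (k : ℕ) :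
    k ≤ finrank K (range f) ↔ ∃ v : Fin k → M, LinearIndependent K (f ∘ v) := by
  constructor
  · intro hk
    obtain ⟨u, hu⟩ := exists_linearIndependent_of_le_finrank hk
    choose v hv using fun i => (u i).2
    refine ⟨v, ?_⟩
    have : f ∘ v = (range f).subtype ∘ u := funext fun i => hv i
    exact this ▸ hu.map' _ (range f).ker_subtype
  · rintro ⟨v, hv⟩
    simpa using (LinearIndependent.of_comp (range f).subtype
      (v := fun i => (⟨f (v i), mem_range_self f (v i)⟩ : range f)) hv).fintype_card_le_finrank

open Polynomial in
theorem LinearIndependent.finite_setOf_not_linearIndependent_add_smul {K ι N : Type*} [Field K]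
    [Fintype ι] [DecidableEq ι] [AddCommGroup N] [Module K N] {a : ι → N}
    (ha : LinearIndependent K a) (b : ι → N) :
    {t : K | ¬LinearIndependent K (fun i => a i + t • b i)}.Finite := by
  -- In coordinates `π` dual to `a`, the family `a + t • b` becomes the rows of `1 + t • M`,
  -- and `det (1 + t • M)` is a polynomial in `t` with constant term `1`.
  obtain ⟨π, hπ⟩ := (Fintype.linearCombination K a).exists_leftInverse_of_injective
    (LinearMap.ker_eq_bot.2 ha.fintypeLinearCombination_injective)
  have hπa : ∀ i, π (a i) = Pi.single i 1 := fun i => by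
    simpa using LinearMap.congr_fun hπ (Pi.single i 1)
  set M : Matrix ι ι K := Matrix.of fun i => π (b i)
  set P : K[X] := (1 + (X : K[X]) • M.map C).det
  have hP : ∀ t, P.eval t = (1 + t • M).det := fun t => by
    rw [← coe_evalRingHom, RingHom.map_det]
    congr 1
    ext i j
    simp [Matrix.one_apply, apply_ite]
    ring
  have hP0 : P ≠ 0 := fun h => by simpa [h] using hP 0
  refine (P.finite_setOfPred_isRoot hP0).subset fun t ht => ?_
  by_contra hroot
  apply ht
  have hrows : LinearIndependent K (fun i => (1 + t • M) i) :=
    Matrix.linearIndependent_rows_iff_isUnit.2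
      ((Matrix.isUnit_iff_isUnit_det _).2 (by rw [← hP]; exact IsUnit.mk0 _ hroot))
  have hπ_comp : π ∘ (fun i => a i + t • b i) = fun i => (1 + t • M) i := by
    ext i j
    simp [hπa, M, Matrix.one_apply, Pi.single_apply, eq_comm]
  exact LinearIndependent.of_comp π (hπ_comp ▸ hrows)

section
variable {V M N : Type*} [AddCommGroup V] [Module ℝ V] [AddCommGroup M] [Module ℝ M]
  [AddCommGroup N] [Module ℝ N] [FiniteDimensional ℝ N]
  [TopologicalSpace V] (Φ : V →ₗ[ℝ] M →ₗ[ℝ] N)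

theorem isOpen_setOf_le_finrank_range [IsTopologicalAddGroup V] [ContinuousSMul ℝ V] [T2Space V]
    [FiniteDimensional ℝ V] (k : ℕ) :
    IsOpen {v | k ≤ finrank ℝ (LinearMap.range (Φ v))} := by
  simp only [LinearMap.le_finrank_range_iff_exists_linearIndependent, Set.ofPred_exists]
  refine isOpen_iUnion fun x => ?_
  let e := (finBasis ℝ N).equivFun
  let F : V →ₗ[ℝ] Fin k → Fin (finrank ℝ N) → ℝ :=
    LinearMap.pi fun i => e.toLinearMap ∘ₗ Φ.flip (x i)
  have : {v | LinearIndependent ℝ (Φ v ∘ x)} = F ⁻¹' {w | LinearIndependent ℝ w} := by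
    ext v
    exact (e.toLinearMap.linearIndependent_iff e.ker).symm
  rw [this]
  exact isOpen_setOfPred_linearIndependent.preimage (LinearMap.continuous_of_finiteDimensional F)

theorem isClosed_setOf_le_finrank_ker [FiniteDimensional ℝ M] [IsTopologicalAddGroup V]
    [ContinuousSMul ℝ V] [T2Space V] [FiniteDimensional ℝ V] (d : ℕ) :
    IsClosed {v | d ≤ finrank ℝ (LinearMap.ker (Φ v))} := by
  have : {v | d ≤ finrank ℝ (LinearMap.ker (Φ v))}ᶜ =
      {v | finrank ℝ M + 1 - d ≤ finrank ℝ (LinearMap.range (Φ v))} := by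
    ext v
    have := (Φ v).finrank_range_add_finrank_ker
    simp only [Set.mem_compl_iff, Set.mem_ofPred_eq]
    omega
  exact isOpen_compl_iff.1 (this ▸ isOpen_setOf_le_finrank_range Φ _)

theorem exists_mem_forall_finrank_ker_le [FiniteDimensional ℝ M] [ContinuousAdd V]
    [ContinuousSMul ℝ V] {U : Set V} (hU : IsOpen U) {v : V} (hv : v ∈ U) :
    ∃ w ∈ U, ∀ w', finrank ℝ (LinearMap.ker (Φ w)) ≤ finrank ℝ (LinearMap.ker (Φ w')) := by
  -- On the line through `v` and a point `w₀` of maximal rank, the rank is maximal at all but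
  -- finitely many points, and some of them lie in `U` near `v`.
  obtain ⟨w₀, hw₀⟩ : ∃ w₀, ∀ w,
      finrank ℝ (LinearMap.ker (Φ w₀)) ≤ finrank ℝ (LinearMap.ker (Φ w)) :=
    ⟨_, fun w => Function.argmin_le (fun w => finrank ℝ (LinearMap.ker (Φ w))) w⟩
  obtain ⟨x, hx⟩ := ((Φ w₀).le_finrank_range_iff_exists_linearIndependent _).1 le_rfl
  let ℓ : ℝ → V := fun t => w₀ + t • (v - w₀)
  have hℓ : Continuous ℓ := by fun_prop
  have hbad :=
    LinearIndependent.finite_setOf_not_linearIndependent_add_smul hx fun i => Φ (v - w₀) (x i)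
  obtain ⟨t, htU, htgood⟩ := ((infinite_of_mem_nhds (1 : ℝ)
    ((hU.preimage hℓ).mem_nhds (by simpa [ℓ] using hv))).sdiff hbad).nonempty
  refine ⟨ℓ t, htU, fun w' => le_trans ?_ (hw₀ w')⟩
  have hrank := ((Φ (ℓ t)).le_finrank_range_iff_exists_linearIndependent _).2
    ⟨x, by simpa [ℓ, Function.comp_def] using not_not.1 htgood⟩
  have := (Φ (ℓ t)).finrank_range_add_finrank_ker
  have := (Φ w₀).finrank_range_add_finrank_ker
  omega

end

theorem exp_apply_bilin_of_leibniz {𝕂 E F G : Type*} [RCLike 𝕂]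
    [NormedAddCommGroup E] [NormedSpace 𝕂 E] [CompleteSpace E]
    [NormedAddCommGroup F] [NormedSpace 𝕂 F] [CompleteSpace F]
    [NormedAddCommGroup G] [NormedSpace 𝕂 G] [CompleteSpace G]
    (B : E →L[𝕂] F →L[𝕂] G) (D₁ : E →L[𝕂] E) (D₂ : F →L[𝕂] F) (D₃ : G →L[𝕂] G)
    (hD : ∀ u v, D₃ (B u v) = B (D₁ u) v + B u (D₂ v)) (u : E) (v : F) :
    exp D₃ (B u v) = B (exp D₁ u) (exp D₂ v) := by
  -- The Leibniz rule makes `f` constant.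
  set f : 𝕂 → G := fun t => exp (t • -D₃) (B (exp (t • D₁) u) (exp (t • D₂) v))
  have hf : ∀ t, HasDerivAt f 0 t := by
    intro t
    have hu := (hasDerivAt_exp_smul_const D₁ t).clm_apply (hasDerivAt_const t u)
    have hv := (hasDerivAt_exp_smul_const D₂ t).clm_apply (hasDerivAt_const t v)
    refine ((hasDerivAt_exp_smul_const (-D₃) t).clm_apply
      ((B.hasFDerivAt.comp_hasDerivAt t hu).clm_apply hv)).congr_deriv ?_
    rw [((Commute.refl D₁).smul_left t).exp_left.eq, ((Commute.refl D₂).smul_left t).exp_left.eq]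
    simp [← hD]
  have hconst : f 1 = f 0 :=
    is_const_of_deriv_eq_zero (fun t => (hf t).differentiableAt) (fun t => (hf t).deriv) 1 0
  have hinv : exp D₃ * exp (-D₃) = 1 := by
    rw [← exp_add_of_commute_of_mem_ball (𝕂 := 𝕂) ((Commute.refl D₃).neg_right), add_neg_cancel,
      exp_zero] <;> simp [expSeries_radius_eq_top]
  simp only [f, one_smul, zero_smul, exp_zero, one_apply_eq_self] at hconst
  rw [← hconst]
  simpa using congrArg (fun T => T (B (exp D₁ u) (exp D₂ v))) hinv

theorem Matrix.exp_mulVec {𝕂 m : Type*} [RCLike 𝕂] [Fintype m] [DecidableEq m]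
    (A : Matrix m m 𝕂) (w : m → 𝕂) :
    exp A *ᵥ w = exp (LinearMap.toContinuousLinearMap (Matrix.toLin' A)) w := by
  let φ := Matrix.toLinAlgEquiv'.trans (Module.End.toContinuousLinearMap (m → 𝕂))
  have hφ : Continuous φ := LinearMap.continuous_of_finiteDimensional φ.toLinearMap
  rw [← Matrix.toLin'_apply, ← LinearMap.coe_toContinuousLinearMap' (Matrix.toLin' (exp A))]
  -- The operator norm makes `Matrix m m 𝕂` a Banach algebra, as `map_exp_of_mem_ball` requires.
  open scoped Norms.Operator in
  have hmap := map_exp_of_mem_ball (𝕂 := 𝕂) φ hφ A (by simp [expSeries_radius_eq_top])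
  exact congrArg (fun T : (m → 𝕂) →L[𝕂] (m → 𝕂) => T w) hmap

theorem finBasis_equivFun_expEnd {V : Type*} [AddCommGroup V] [Module ℝ V] [FiniteDimensional ℝ V]
    (f : Module.End ℝ V) (z : V) :
    (finBasis ℝ V).equivFun (expEnd f z) =
      exp (LinearMap.toContinuousLinearMap ((finBasis ℝ V).equivFun.conj f))
        ((finBasis ℝ V).equivFun z) := by
  set b := finBasis ℝ V
  have hconj : b.equivFun.conj f = Matrix.toLin' (LinearMap.toMatrix b b f) := by
    rw [LinearMap.toMatrix, LinearEquiv.trans_apply, Matrix.toLin'_toMatrix']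
    rfl
  rw [hconj, ← Matrix.exp_mulVec, expEnd]
  have hrepr :=
    LinearMap.toMatrix_mulVec_repr b b (Matrix.toLin b b (exp (LinearMap.toMatrix b b f))) z
  rw [LinearMap.toMatrix_toLin] at hrepr
  simpa using hrepr.symm

theorem expEnd_lie {g : Type*} [LieRing g] [LieAlgebra ℝ g] [FiniteDimensional ℝ g]
    (D : Module.End ℝ g) (hD : ∀ a b : g, D ⁅a, b⁆ = ⁅D a, b⁆ + ⁅a, D b⁆) (a b : g) :
    expEnd D ⁅a, b⁆ = ⁅expEnd D a, expEnd D b⁆ := by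
  set e := (finBasis ℝ g).equivFun
  set D' := LinearMap.toContinuousLinearMap (e.conj D)
  have hD' (z : g) : D' (e z) = e (D z) := by simp [D', LinearEquiv.conj_apply]
  set B := (((LieModule.toEnd ℝ g g : g →ₗ[ℝ] Module.End ℝ g).compl₁₂ e.symm.toLinearMap
    e.symm.toLinearMap).compr₂ e.toLinearMap).toContinuousBilinearMap
  have hB (x y : g) : B (e x) (e y) = e ⁅x, y⁆ := by simp [B]
  have hBD (u v) : D' (B u v) = B (D' u) v + B u (D' v) := by
    obtain ⟨x, rfl⟩ := e.surjective u
    obtain ⟨y, rfl⟩ := e.surjective v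
    simp only [hB, hD', hD, map_add]
  apply e.injective
  rw [finBasis_equivFun_expEnd, ← hB, exp_apply_bilin_of_leibniz B D' D' D' hBD,
    ← finBasis_equivFun_expEnd, ← finBasis_equivFun_expEnd, hB]

section Coadjoint
variable {g : Type*} [LieRing g] [LieAlgebra ℝ g]

variable (g) in
noncomputable def coadMap : Dual ℝ g →ₗ[ℝ] g →ₗ[ℝ] Dual ℝ g :=
  (LinearMap.llcomp ℝ g g ℝ).compl₂ (LieModule.toEnd ℝ g g : g →ₗ[ℝ] Module.End ℝ g)

theorem ker_coadMap (ξ : Dual ℝ g) : LinearMap.ker (coadMap g ξ) = coadStab g ξ := by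
  ext x
  simp [coadMap, coadStab, LinearMap.ext_iff]

theorem finrank_ker_coadMap (ξ : Dual ℝ g) :
    finrank ℝ (LinearMap.ker (coadMap g ξ)) = finrank ℝ (coadStab g ξ) := by
  rw [ker_coadMap]

theorem coadStab_comp {γ : g ≃ₗ[ℝ] g} (hγ : ∀ a b : g, γ ⁅a, b⁆ = ⁅γ a, γ b⁆) (ξ : Dual ℝ g) :
    coadStab g (ξ ∘ₗ γ.toLinearMap) = (coadStab g ξ).map γ.symm.toLinearMap := by
  ext x
  rw [Submodule.mem_map_equiv, LinearEquiv.symm_symm]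
  change (∀ y, ξ (γ ⁅x, y⁆) = 0) ↔ ∀ y, ξ ⁅γ x, y⁆ = 0
  simp only [hγ]
  exact (γ.surjective.forall (p := fun y => ξ ⁅γ x, y⁆ = 0)).symm

variable [FiniteDimensional ℝ g]

theorem lie_apply_of_mem_intGroup {γ : g ≃ₗ[ℝ] g} (hγ : γ ∈ intGroup g) (a b : g) :
    γ ⁅a, b⁆ = ⁅γ a, γ b⁆ := by
  induction hγ using Subgroup.closure_induction generalizing a b with
  | mem γ hγ =>
    obtain ⟨x, hx⟩ := hγ
    simp only [← LinearEquiv.coe_toLinearMap, hx]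
    exact expEnd_lie _ (leibniz_lie x) a b
  | one => rfl
  | mul γ δ _ _ hγ hδ => simp [hγ, hδ]
  | inv γ _ hγ =>
    apply γ.injective
    simp [hγ]

theorem finrank_coadStab_of_mem_coadOrbit {ξ ζ : Dual ℝ g} (hζ : ζ ∈ coadOrbit ξ) :
    finrank ℝ (coadStab g ζ) = finrank ℝ (coadStab g ξ) := by
  obtain ⟨γ, hγ, rfl⟩ := hζ
  rw [coadStab_comp (lie_apply_of_mem_intGroup ((intGroup g).inv_mem hγ))]
  exact LinearEquiv.finrank_map_eq _ _

end Coadjoint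

theorem statement7_general {g : Type*} [LieRing g] [LieAlgebra ℝ g] [FiniteDimensional ℝ g]
    [TopologicalSpace (Module.Dual ℝ g)] [IsTopologicalAddGroup (Module.Dual ℝ g)]
    [ContinuousSMul ℝ (Module.Dual ℝ g)] [T2Space (Module.Dual ℝ g)]
    (O : Set (Module.Dual ℝ g)) (hO : IsOpen O)
    (horb : ∀ ξ ∈ O, O ⊆ closure (coadOrbit ξ)) :
    O ⊆ {ξ : Module.Dual ℝ g |
        Module.finrank ℝ (coadStab g ξ) = ⨅ η : Module.Dual ℝ g, Module.finrank ℝ (coadStab g η)} := by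
  intro ξ hξ
  obtain ⟨η, hηO, hη⟩ := exists_mem_forall_finrank_ker_le (coadMap g) hO hξ
  simp only [finrank_ker_coadMap] at hη
  have hclosed := isClosed_setOf_le_finrank_ker (coadMap g) (finrank ℝ (coadStab g ξ))
  simp only [finrank_ker_coadMap] at hclosed
  have hξη : finrank ℝ (coadStab g ξ) ≤ finrank ℝ (coadStab g η) :=
    hclosed.closure_subset_iff.2 (fun ζ hζ => (finrank_coadStab_of_mem_coadOrbit hζ).ge)
      (horb ξ hξ hηO)
  exact le_antisymm (le_ciInf fun ζ => hξη.trans (hη ζ)) (ciInf_le (OrderBot.bddBelow _) ξ)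

/-- If `O ⊆ g*` is a nonempty open subset contained in the closure of the coadjoint orbit
`Int(g)·ξ` of each of its points `ξ`, then `O ⊆ g*_gen`, the set of functionals `ξ` with
`dim g(ξ)` minimal (equivalently, whose coadjoint orbit has maximal dimension).
(The dual `g*` carries its standard topology: any Hausdorff vector topology, which is
unique since `g*` is finite-dimensional.) -/
theorem statement7 {g : Type*} [LieRing g] [LieAlgebra ℝ g] [FiniteDimensional ℝ g]
    [TopologicalSpace (Module.Dual ℝ g)] [IsTopologicalAddGroup (Module.Dual ℝ g)]
    [ContinuousSMul ℝ (Module.Dual ℝ g)] [T2Space (Module.Dual ℝ g)]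
    (O : Set (Module.Dual ℝ g)) (hne : O.Nonempty) (hO : IsOpen O)
    (horb : ∀ ξ ∈ O, O ⊆ closure (coadOrbit ξ)) :
    O ⊆ {ξ : Module.Dual ℝ g |
        Module.finrank ℝ (coadStab g ξ) = ⨅ η : Module.Dual ℝ g, Module.finrank ℝ (coadStab g η)} :=
  statement7_general O hO horb
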